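/- arXiv:2106.13470 — 2 statements merged into one kernel-verified Lean document; each statement's English description precedes it below -/
import Mathlib

section
/- Under the localized frame setup, the Ω-assumptions, and the decay assumption on Θ, the following holds: for every ε > 0 there exists a compact set M ⊆ ℝ^n, depending only on ε, Ω, and the setup data (not on f), such that every f = Σ_{γ∈Γ} c_γ F_γ ∈ V admits the truncation f̃ = Σ_{γ∈Γ∩M} c_γ F_γ ∈ V_M satisfying |f(x) − f̃(x)| ≤ (ε/μ(Ω)) ‖f‖_{L^p(ℝ^n)} for all x ∈ Ω, and consequently ‖f − f̃‖_{L^p(Ω)} ≤ ε ‖f‖_{L^p(ℝ^n)}. -/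
/-!
At a point `x`, the term `c γ F γ x` is at most `‖c‖_∞` times the `W(L¹)` weight of `Θ` on the
unit cube containing `x - γ`, and at most `2ⁿ N(Γ)` points `γ` share that cube. Since
`‖c‖_∞ ≤ ‖c‖_p ≤ B^{1/p} ‖f‖_p` by the frame inequality, it suffices to pick finitely many cubes
`s` outside which the weights of `Θ` sum to less than `ε / (μ(Ω) 2ⁿ N(Γ) B^{1/p})`, and to keep
the `γ` in `M = Ω - ⋃_{k ∈ s} cube k`: for `x ∈ Ω`, every discarded `γ` has `x - γ` outside `s`.
The `L^p(Ω)` bound follows by integrating, using `μ(Ω)^{1/p} ≤ μ(Ω)`.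
-/

open MeasureTheory Set
open scoped Classical
open scoped Pointwise

theorem IsCompact.sub {G : Type*} [TopologicalSpace G] [Sub G] [ContinuousSub G] {s t : Set G}
    (hs : IsCompact s) (ht : IsCompact t) : IsCompact (s - t) := by
  rw [← image2_sub, ← image_prod]
  exact (hs.prod ht).image continuous_sub

section FiberSums

variable {ι κ : Type*}

theorem tsum_le_mul_tsum_of_card_fiber_le {h : ι → ℝ} {g : κ → ℝ} (h0 : 0 ≤ h) (hg0 : 0 ≤ g)
    (hg : Summable g) (φ : ι → κ) {K : ℕ}
    (hfib : ∀ (k : κ) (v : Finset ι), (∀ i ∈ v, φ i = k) → v.card ≤ K)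
    (hle : ∀ i, h i ≤ g (φ i)) :
    Summable h ∧ ∑' i, h i ≤ K * ∑' k, g k := by
  classical
  have hfinite : ∀ u : Finset ι, ∑ i ∈ u, h i ≤ K * ∑' k, g k := fun u =>
    calc ∑ i ∈ u, h i ≤ ∑ i ∈ u, g (φ i) := Finset.sum_le_sum fun i _ => hle i
      _ = ∑ k ∈ u.image φ, {i ∈ u | φ i = k}.card • g k := Finset.sum_comp g φ
      _ ≤ ∑ k ∈ u.image φ, K * g k := by
        gcongr with k
        rw [nsmul_eq_mul]
        gcongr
        · exact hg0 k
        · exact_mod_cast hfib k _ fun i hi => (Finset.mem_filter.1 hi).2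
      _ ≤ K * ∑' k, g k := by
        rw [← Finset.mul_sum]
        gcongr
        exact hg.sum_le_tsum _ fun k _ => hg0 k
  have hs : Summable h := summable_of_sum_le h0 hfinite
  exact ⟨hs, hs.tsum_le_of_sum_le hfinite⟩

theorem abs_tsum_sub_tsum_indicator_le {a : ι → ℝ} {g : κ → ℝ} (hg0 : 0 ≤ g) (hg : Summable g)
    (φ : ι → κ) {K : ℕ} (hfib : ∀ (k : κ) (v : Finset ι), (∀ i ∈ v, φ i = k) → v.card ≤ K)
    (ha : ∀ i, |a i| ≤ g (φ i)) {S : Set ι} {s : Set κ} (hS : ∀ i ∉ S, φ i ∉ s) :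
    |∑' i, a i - ∑' i, S.indicator a i| ≤ K * ∑' k : ↥sᶜ, g k := by
  have ha_sum : Summable a :=
    (tsum_le_mul_tsum_of_card_fiber_le (fun i => abs_nonneg (a i)) hg0 hg φ hfib ha).1.of_abs
  have htail : ∀ i, |Sᶜ.indicator a i| ≤ sᶜ.indicator g (φ i) := by
    intro i
    by_cases hi : i ∈ S
    · simpa [hi] using Set.indicator_nonneg (fun k _ => hg0 k) (φ i)
    · simpa [hi, hS i hi] using ha i
  obtain ⟨htail_sum, htail_le⟩ := tsum_le_mul_tsum_of_card_fiber_le (fun i => abs_nonneg _)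
    (fun k => Set.indicator_nonneg (fun k _ => hg0 k) k) (hg.indicator sᶜ) φ hfib htail
  rw [← ha_sum.tsum_sub (ha_sum.indicator S), tsum_subtype]
  calc |∑' i, (a i - S.indicator a i)| = |∑' i, Sᶜ.indicator a i| := by
        rw [Set.indicator_compl]
        simp only [Pi.sub_apply]
    _ ≤ ∑' i, |Sᶜ.indicator a i| := by
        simpa only [Real.norm_eq_abs] using norm_tsum_le_tsum_norm (f := Sᶜ.indicator a) htail_sum
    _ ≤ K * ∑' k, sᶜ.indicator g k := htail_le

end FiberSums

theorem abs_le_tsum_rpow_rpow_one_div {ι : Type*} {p : ℝ} (hp : 0 < p) {c : ι → ℝ}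
    (hc : Summable fun i => |c i| ^ p) (i : ι) :
    |c i| ≤ (∑' j, |c j| ^ p) ^ (1 / p) := by
  calc |c i| = (|c i| ^ p) ^ (1 / p) := by rw [one_div, Real.rpow_rpow_inv (abs_nonneg _) hp.ne']
    _ ≤ (∑' j, |c j| ^ p) ^ (1 / p) := by
      gcongr
      exact hc.le_tsum i fun j _ => by positivity

theorem setIntegral_rpow_rpow_one_div_le_of_abs_le {X : Type*} [MeasurableSpace X] {μ : Measure X}
    {s : Set X} (hs : μ s < ⊤) {f : X → ℝ} {D p : ℝ} (hD : 0 ≤ D) (hp : 0 < p)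
    (hf : ∀ x ∈ s, |f x| ≤ D) :
    (∫ x in s, |f x| ^ p ∂μ) ^ (1 / p) ≤ D * μ.real s ^ (1 / p) := by
  have hint : ∫ x in s, |f x| ^ p ∂μ ≤ D ^ p * μ.real s := by
    refine (Real.le_norm_self _).trans (norm_setIntegral_le_of_norm_le_const hs fun x hx => ?_)
    rw [Real.norm_eq_abs, abs_of_nonneg (by positivity)]
    exact Real.rpow_le_rpow (abs_nonneg _) (hf x hx) hp.le
  calc (∫ x in s, |f x| ^ p ∂μ) ^ (1 / p) ≤ (D ^ p * μ.real s) ^ (1 / p) := by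
        gcongr
    _ = D * μ.real s ^ (1 / p) := by
        rw [Real.mul_rpow (by positivity) measureReal_nonneg, one_div, Real.rpow_rpow_inv hD hp.ne']

noncomputable section UnitCubes

variable {n : ℕ}

def unitCube (k : Fin n → ℤ) : Set (Fin n → ℝ) :=
  Icc (fun i => (k i : ℝ)) (fun i => (k i : ℝ) + 1)

def cubeIndex (y : Fin n → ℝ) : Fin n → ℤ := fun i => ⌊y i⌋

theorem mem_unitCube_cubeIndex (y : Fin n → ℝ) : y ∈ unitCube (cubeIndex y) :=
  ⟨fun i => Int.floor_le (y i), fun i => (Int.lt_floor_add_one (y i)).le⟩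

theorem isCompact_unitCube (k : Fin n → ℤ) : IsCompact (unitCube k) := isCompact_Icc

theorem floor_mem_Icc_of_floor_sub_eq {a b : ℝ} {k : ℤ} (h : ⌊a - b⌋ = k) :
    ⌊b⌋ ∈ Finset.Icc ⌊a - k - 1⌋ (⌊a - k - 1⌋ + 1) := by
  have hlow := Int.floor_le (a - b)
  have hhigh := Int.lt_floor_add_one (a - b)
  rw [h] at hlow hhigh
  refine Finset.mem_Icc.2 ⟨Int.floor_le_floor (by linarith), ?_⟩
  rw [← Int.floor_add_one]
  exact Int.floor_le_floor (by linarith)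

/-- Such `γ` lie in the `2 ^ n` unit cubes with integer corners between `⌊x - k - 1⌋` and
`⌊x - k⌋`. -/
theorem card_le_of_cubeIndex_sub_eq {Γ : Set (Fin n → ℝ)} {N : ℕ}
    (hfin : ∀ k, (Γ ∩ unitCube k).Finite) (hcard : ∀ k, (Γ ∩ unitCube k).ncard ≤ N)
    (x : Fin n → ℝ) (k : Fin n → ℤ) (v : Finset Γ)
    (hv : ∀ γ ∈ v, cubeIndex (x - (γ : Fin n → ℝ)) = k) :
    v.card ≤ 2 ^ n * N := by
  classical
  set m : Fin n → ℤ := fun i => ⌊x i - k i - 1⌋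
  have hmaps : ∀ γ ∈ v, cubeIndex (γ : Fin n → ℝ) ∈ Finset.Icc m (m + 1) := fun γ hγ => by
    have hcoord := fun i => Finset.mem_Icc.1 (floor_mem_Icc_of_floor_sub_eq (congrFun (hv γ hγ) i))
    exact Finset.mem_Icc.2 ⟨fun i => (hcoord i).1, fun i => (hcoord i).2⟩
  have hbox : (Finset.Icc m (m + 1)).card = 2 ^ n := by
    have h2 : ∀ i, (m i + 1 + 1 - m i).toNat = 2 := fun i => by omega
    simp [Pi.card_Icc, Int.card_Icc, h2]
  have hfiber : ∀ e ∈ Finset.Icc m (m + 1),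
      (v.filter fun γ : Γ => cubeIndex (γ : Fin n → ℝ) = e).card ≤ N := by
    intro e _
    refine le_trans ?_ ((Set.ncard_eq_toFinset_card _ (hfin e)).symm.trans_le (hcard e))
    refine Finset.card_le_card_of_injOn Subtype.val (fun γ hγ => ?_) Subtype.val_injective.injOn
    obtain ⟨-, hγe⟩ := Finset.mem_filter.1 hγ
    exact (hfin e).mem_toFinset.2 ⟨γ.2, hγe ▸ mem_unitCube_cubeIndex _⟩
  calc v.card ≤ N * (Finset.Icc m (m + 1)).card :=
        Finset.card_le_mul_card_image_of_maps_to hmaps N hfiber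
    _ = 2 ^ n * N := by rw [hbox, mul_comm]

/-- The `k`-th term of the Wiener amalgam norm `‖Θ‖_{W(L¹)}`. -/
def localSup (Θ : (Fin n → ℝ) → ℝ) (k : Fin n → ℤ) : ℝ :=
  sSup ((fun x => |Θ (x + fun i => (k i : ℝ))|) '' Icc 0 1)

theorem localSup_nonneg (Θ : (Fin n → ℝ) → ℝ) : 0 ≤ localSup Θ := fun _ =>
  Real.sSup_nonneg <| by
    rintro _ ⟨x, -, rfl⟩
    exact abs_nonneg _

theorem abs_le_localSup_cubeIndex {Θ : (Fin n → ℝ) → ℝ} {T : ℝ} (hT : ∀ x, |Θ x| ≤ T)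
    (y : Fin n → ℝ) : |Θ y| ≤ localSup Θ (cubeIndex y) := by
  refine le_csSup ⟨T, ?_⟩ ⟨y - fun i => (cubeIndex y i : ℝ), ⟨?_, ?_⟩, by simp⟩
  · rintro _ ⟨x, -, rfl⟩
    exact hT _
  · intro i
    simp [cubeIndex]
  · intro i
    simpa [cubeIndex] using (Int.fract_lt_one (y i)).le

end UnitCubes

theorem abs_tsum_sub_truncation_le {n : ℕ} {Γ : Set (Fin n → ℝ)} {N : ℕ}
    (hfin : ∀ k, (Γ ∩ unitCube k).Finite) (hcard : ∀ k, (Γ ∩ unitCube k).ncard ≤ N)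
    {Θ : (Fin n → ℝ) → ℝ} {T : ℝ} (hT : ∀ x, |Θ x| ≤ T) (hΘ : Summable (localSup Θ))
    {F : Γ → (Fin n → ℝ) → ℝ} (hF : ∀ γ x, |F γ x| ≤ Θ (x - (γ : Fin n → ℝ)))
    {c : Γ → ℝ} {L : ℝ} (hL : 0 ≤ L) (hc : ∀ γ, |c γ| ≤ L)
    {Ω : Set (Fin n → ℝ)} (s : Finset (Fin n → ℤ)) {x : Fin n → ℝ} (hx : x ∈ Ω) :
    |(∑' γ : Γ, c γ * F γ x) -
        ∑' γ : Γ, (if (γ : Fin n → ℝ) ∈ Ω - ⋃ k ∈ s, unitCube k then c γ * F γ x else 0)| ≤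
      (2 ^ n * N : ℕ) * (L * ∑' k : {k // k ∉ s}, localSup Θ k) := by
  have hterm : ∀ γ : Γ, |c γ * F γ x| ≤ (L • localSup Θ) (cubeIndex (x - (γ : Fin n → ℝ))) :=
    fun γ => by
      rw [abs_mul, Pi.smul_apply, smul_eq_mul]
      exact mul_le_mul (hc γ) ((hF γ x).trans ((le_abs_self _).trans
        (abs_le_localSup_cubeIndex hT _))) (abs_nonneg _) hL
  have houtside : ∀ γ ∉ {γ : Γ | (γ : Fin n → ℝ) ∈ Ω - ⋃ k ∈ s, unitCube k},
      cubeIndex (x - (γ : Fin n → ℝ)) ∉ (s : Set (Fin n → ℤ)) := fun γ hγ hk =>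
    hγ (Set.mem_sub.2 ⟨x, hx, x - γ, mem_iUnion₂.2 ⟨_, hk, mem_unitCube_cubeIndex _⟩,
      sub_sub_cancel x γ⟩)
  have htail := abs_tsum_sub_tsum_indicator_le (smul_nonneg hL (localSup_nonneg Θ))
    (hΘ.const_smul L) _ (card_le_of_cubeIndex_sub_eq hfin hcard x) hterm houtside
  simp only [Pi.smul_apply, smul_eq_mul, tsum_mul_left] at htail
  exact htail

theorem statement4_general
    (n : ℕ) (p : ℝ) (hp : 1 ≤ p)
    (Γ : Set (Fin n → ℝ))
    (NΓ : ℕ)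
    (hNΓfin : ∀ k : Fin n → ℤ,
      (Γ ∩ Set.Icc (fun i => (k i : ℝ)) (fun i => (k i : ℝ) + 1)).Finite)
    (hNΓ : ∀ k : Fin n → ℤ,
      (Γ ∩ Set.Icc (fun i => (k i : ℝ)) (fun i => (k i : ℝ) + 1)).ncard ≤ NΓ)
    -- `Θ ∈ W(L¹)`
    (Θ : (Fin n → ℝ) → ℝ) (T : ℝ) (hΘbdd : ∀ x, |Θ x| ≤ T)
    (hΘsum : Summable (fun k : Fin n → ℤ =>
      sSup ((fun x => |Θ (x + fun i => (k i : ℝ))|) '' Set.Icc (0 : Fin n → ℝ) 1)))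
    -- the localized frame
    (F : Γ → (Fin n → ℝ) → ℝ)
    (hFloc : ∀ γ x, |F γ x| ≤ Θ (x - (γ : Fin n → ℝ)))
    (A B : ℝ) (hB : 0 < B)
    (hframe : ∀ c : Γ → ℝ, Summable (fun γ => |c γ| ^ p) →
      A * ∫ y, |∑' γ : Γ, c γ * F γ y| ^ p ≤ ∑' γ : Γ, |c γ| ^ p ∧
      ∑' γ : Γ, |c γ| ^ p ≤ B * ∫ y, |∑' γ : Γ, c γ * F γ y| ^ p)
    -- Ω-assumptions
    (Ω : Set (Fin n → ℝ)) (hΩ : IsCompact Ω) (hΩvol : 1 ≤ (volume Ω).toReal)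
    -- conclusion
    (ε : ℝ) (hε : 0 < ε) :
    ∃ M : Set (Fin n → ℝ), IsCompact M ∧
      ∀ c : Γ → ℝ, Summable (fun γ => |c γ| ^ p) →
        (∀ x ∈ Ω,
          |(∑' γ : Γ, c γ * F γ x) -
              ∑' γ : Γ, (if (γ : Fin n → ℝ) ∈ M then c γ * F γ x else 0)| ≤
            (ε / (volume Ω).toReal) * (∫ y, |∑' γ : Γ, c γ * F γ y| ^ p) ^ (1 / p)) ∧
        (∫ x in Ω,
            |(∑' γ : Γ, c γ * F γ x) -
              ∑' γ : Γ, (if (γ : Fin n → ℝ) ∈ M then c γ * F γ x else 0)| ^ p) ^ (1 / p) ≤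
          ε * (∫ y, |∑' γ : Γ, c γ * F γ y| ^ p) ^ (1 / p) := by
  have hp0 : 0 < p := by linarith
  set μΩ := (volume Ω).toReal
  have hμΩ : 0 < μΩ := by linarith
  set K : ℝ := (2 ^ n * NΓ : ℕ) * B ^ (1 / p)
  obtain ⟨s, hs⟩ : ∃ s : Finset (Fin n → ℤ), K * ∑' k : {k // k ∉ s}, localSup Θ k ≤ ε / μΩ := by
    have htail := (tendsto_tsum_compl_atTop_zero (localSup Θ)).const_mul K
    rw [mul_zero] at htail
    exact (htail.eventually (eventually_le_nhds (by positivity))).exists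
  refine ⟨Ω - ⋃ k ∈ s, unitCube k,
    hΩ.sub (s.finite_toSet.isCompact_biUnion fun k _ => isCompact_unitCube k), fun c hc => ?_⟩
  set I := ∫ y, |∑' γ : Γ, c γ * F γ y| ^ p
  have hI : 0 ≤ I := integral_nonneg fun y => by positivity
  have hcI : ∀ γ, |c γ| ≤ B ^ (1 / p) * I ^ (1 / p) := fun γ =>
    (abs_le_tsum_rpow_rpow_one_div hp0 hc γ).trans <| by
      rw [← Real.mul_rpow hB.le hI]
      gcongr
      exact (hframe c hc).2
  have hpointwise : ∀ x ∈ Ω, |(∑' γ : Γ, c γ * F γ x) - ∑' γ : Γ,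
      (if (γ : Fin n → ℝ) ∈ Ω - ⋃ k ∈ s, unitCube k then c γ * F γ x else 0)| ≤
      ε / μΩ * I ^ (1 / p) := fun x hx =>
    (abs_tsum_sub_truncation_le hNΓfin hNΓ hΘbdd hΘsum hFloc (by positivity) hcI s hx).trans <|
      calc _ = K * (∑' k : {k // k ∉ s}, localSup Θ k) * I ^ (1 / p) := by ring
        _ ≤ ε / μΩ * I ^ (1 / p) := by gcongr
  refine ⟨hpointwise, ?_⟩
  calc _ ≤ ε / μΩ * I ^ (1 / p) * μΩ ^ (1 / p) :=
        setIntegral_rpow_rpow_one_div_le_of_abs_le hΩ.measure_lt_top (by positivity) hp0 hpointwise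
    _ ≤ ε / μΩ * I ^ (1 / p) * μΩ ^ (1 : ℝ) := by
        have hμΩ_rpow := Real.rpow_le_rpow_of_exponent_le hΩvol ((div_le_one hp0).2 hp)
        gcongr
    _ = ε * I ^ (1 / p) := by
        rw [Real.rpow_one]
        field_simp

/-- Under the localized frame setup, the Ω-assumptions and the decay assumption on
`Θ`, for every `ε > 0` there is a compact set `M` (independent of `f`) such that every
`f = Σ_γ c_γ F_γ ∈ V` admits the truncation `f̃ = Σ_{γ∈Γ∩M} c_γ F_γ` with
`|f(x) − f̃(x)| ≤ (ε/μ(Ω))‖f‖_{L^p}` on `Ω`, and hence `‖f − f̃‖_{L^p(Ω)} ≤ ε‖f‖_{L^p}`. -/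
theorem statement4
    (n : ℕ) (p : ℝ) (hp : 1 ≤ p)
    (Γ : Set (Fin n → ℝ)) (hΓc : Γ.Countable)
    (β : ℝ) (hβ : 0 < β)
    (hsep : ∀ γ ∈ Γ, ∀ γ' ∈ Γ, γ ≠ γ' → β ≤ ‖γ - γ'‖)
    (NΓ : ℕ)
    (hNΓfin : ∀ k : Fin n → ℤ,
      (Γ ∩ Set.Icc (fun i => (k i : ℝ)) (fun i => (k i : ℝ) + 1)).Finite)
    (hNΓ : ∀ k : Fin n → ℤ,
      (Γ ∩ Set.Icc (fun i => (k i : ℝ)) (fun i => (k i : ℝ) + 1)).ncard ≤ NΓ)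
    -- `Θ ∈ W(L¹)`
    (Θ : (Fin n → ℝ) → ℝ) (T : ℝ) (hΘbdd : ∀ x, |Θ x| ≤ T)
    (hΘsum : Summable (fun k : Fin n → ℤ =>
      sSup ((fun x => |Θ (x + fun i => (k i : ℝ))|) '' Set.Icc (0 : Fin n → ℝ) 1)))
    -- decay assumption on Θ
    (C α : ℝ) (hC : 0 < C)
    (hα1 : 1 < p → p / (p - 1) ≤ α) (hα2 : p = 1 → 1 ≤ α)
    (hdecay : ∀ N : ℝ, 1 ≤ N →
      ∑' k : {k : Fin n → ℤ // ¬ ∀ i, |(k i : ℝ)| ≤ N / 2},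
          sSup ((fun x => |Θ (x - fun i => ((k : Fin n → ℤ) i : ℝ))|) ''
            Set.Icc (0 : Fin n → ℝ) 1)
        < C / N ^ ((n : ℝ) * α))
    -- the localized frame
    (F : Γ → (Fin n → ℝ) → ℝ)
    (hFcont : ∀ γ, Continuous (F γ))
    (hFloc : ∀ γ x, |F γ x| ≤ Θ (x - (γ : Fin n → ℝ)))
    (A B : ℝ) (hA : 0 < A) (hB : 0 < B)
    (hframe : ∀ c : Γ → ℝ, Summable (fun γ => |c γ| ^ p) →
      A * ∫ y, |∑' γ : Γ, c γ * F γ y| ^ p ≤ ∑' γ : Γ, |c γ| ^ p ∧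
      ∑' γ : Γ, |c γ| ^ p ≤ B * ∫ y, |∑' γ : Γ, c γ * F γ y| ^ p)
    -- Ω-assumptions
    (Ω : Set (Fin n → ℝ)) (hΩ : IsCompact Ω) (hΩvol : 1 ≤ (volume Ω).toReal)
    (d : ℕ)
    (hbd : ∃ s : Finset (Fin n → ℤ), s.card = d ∧ frontier Ω ⊆
      ⋃ k ∈ s, Set.Icc (fun i => (k i : ℝ)) (fun i => (k i : ℝ) + 1))
    (CΓ : ℝ) (hCΓ : 0 < CΓ) (hΓΩfin : (Γ ∩ Ω).Finite)
    (hΓΩ : ((Γ ∩ Ω).ncard : ℝ) ≤ CΓ * (volume Ω).toReal)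
    -- conclusion
    (ε : ℝ) (hε : 0 < ε) :
    ∃ M : Set (Fin n → ℝ), IsCompact M ∧
      ∀ c : Γ → ℝ, Summable (fun γ => |c γ| ^ p) →
        (∀ x ∈ Ω,
          |(∑' γ : Γ, c γ * F γ x) -
              ∑' γ : Γ, (if (γ : Fin n → ℝ) ∈ M then c γ * F γ x else 0)| ≤
            (ε / (volume Ω).toReal) * (∫ y, |∑' γ : Γ, c γ * F γ y| ^ p) ^ (1 / p)) ∧
        (∫ x in Ω,
            |(∑' γ : Γ, c γ * F γ x) -
              ∑' γ : Γ, (if (γ : Fin n → ℝ) ∈ M then c γ * F γ x else 0)| ^ p) ^ (1 / p) ≤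
          ε * (∫ y, |∑' γ : Γ, c γ * F γ y| ^ p) ^ (1 / p) :=
  statement4_general n p hp Γ NΓ hNΓfin hNΓ Θ T hΘbdd hΘsum F hFloc A B hB hframe Ω hΩ hΩvol ε hε
end

section
/- Let f : ℝ^n → ℝ (or ℂ) be bounded, let a ∈ (0,1/2], j₀ ∈ ℤ, and for each integer j ≥ j₀ let g_j be a function with ‖f − g_j‖_{L^∞(ℝ^n)} ≤ a(1+a)^j. With U_j, D_j and h = h(f) defined from (g_j) as in the h-construction, the following hold with C₁(a) = 1−a and C₂(a) = (1+a)²: (i) for every x ∈ ℝ^n \ D_{j₀}, C₁(a) h(x) ≤ |f(x)| ≤ C₂(a) h(x); (ii) for every x ∈ D_{j₀}, |f(x)| ≤ C₂(a)(1+a)^{j₀}. -/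
/-!
Since `g_j` is within `a (1+a)^j` of `f`, membership of `x` in `U_j` forces
`|f x| ≥ (1-a)(1+a)^j`, and non-membership in `U_{j+1}` forces `|f x| ≤ (1+a)²(1+a)^j`.
The first bound shows that `x` lies in only finitely many `U_j` (as `a < 1`), so off `D_{j₀}`
there is a greatest `m` with `x ∈ U_m`; then `x ∈ D_m`, `h x = (1+a)^m`, and both bounds
apply with `j = m`. On `D_{j₀}` only the second bound with `j = j₀` is needed.
-/

open Set

lemma one_sub_mul_le_abs_of_abs_sub_le {u v a c : ℝ} (huv : |u - v| ≤ a * c) (hc : c ≤ |v|) :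
    (1 - a) * c ≤ |u| := by
  have := abs_sub_abs_le_abs_sub v u
  rw [abs_sub_comm] at this
  linarith

lemma abs_le_one_add_mul_of_abs_sub_le {u v a c : ℝ} (huv : |u - v| ≤ a * c) (hv : |v| < c) :
    |u| ≤ (1 + a) * c := by
  have := abs_sub_abs_le_abs_sub u v
  linarith

lemma bddAbove_setOf_one_sub_mul_zpow_le {a : ℝ} (ha0 : 0 < a) (ha1 : a < 1) (y : ℝ) :
    BddAbove {z : ℤ | (1 - a) * (1 + a) ^ z ≤ y} := by
  obtain ⟨N, hN⟩ := pow_unbounded_of_one_lt (y / (1 - a)) (by linarith : (1 : ℝ) < 1 + a)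
  refine ⟨N, fun z hz => ?_⟩
  have hz' : (1 + a) ^ z < (1 + a) ^ (N : ℤ) := by
    rw [zpow_natCast]
    exact lt_of_le_of_lt ((le_div_iff₀' (by linarith)).mpr hz) hN
  exact ((zpow_lt_zpow_iff_right₀ (by linarith)).mp hz').le

section Layer

variable {X : Type*} (U : ℤ → Set X)

/-- For `j > j₀` this is the paper's `D_j`. -/
def layer (j : ℤ) : Set X := U j \ ⋃ (k : ℤ) (_ : j < k), U k

variable {U}

lemma mem_layer_iff {x : X} {j : ℤ} : x ∈ layer U j ↔ x ∈ U j ∧ ∀ k, j < k → x ∉ U k := by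
  simp [layer]

lemma eq_of_mem_layer_of_mem_layer {x : X} {i j : ℤ} (hi : x ∈ layer U i) (hj : x ∈ layer U j) :
    i = j := by
  rw [mem_layer_iff] at hi hj
  by_contra hne
  rcases lt_or_gt_of_ne hne with hlt | hgt
  · exact hi.2 j hlt hj.1
  · exact hj.2 i hgt hi.1

lemma exists_mem_layer_of_bddAbove {x : X} {j₀ : ℤ} (hx : ∃ k, j₀ < k ∧ x ∈ U k)
    (hbdd : BddAbove {k | j₀ < k ∧ x ∈ U k}) : ∃ m, j₀ < m ∧ x ∈ layer U m := by
  obtain ⟨b, hb⟩ := hbdd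
  obtain ⟨m, ⟨hm, hxm⟩, hmax⟩ := Int.exists_greatest_of_bdd ⟨b, fun k hk => hb hk⟩ hx
  refine ⟨m, hm, mem_layer_iff.mpr ⟨hxm, fun k hk hxk => ?_⟩⟩
  exact absurd (hmax k ⟨hm.trans hk, hxk⟩) (not_le.mpr hk)

lemma tsum_mul_indicator_eq_of_mem_layer {D : ℤ → Set X} {j₀ m : ℤ}
    (hD : ∀ j, j₀ < j → D j = layer U j) (w : ℤ → ℝ) {x : X} (hm : j₀ < m)
    (hx : x ∈ layer U m) :
    ∑' j : {j : ℤ // j₀ < j}, w j * (D j).indicator (fun _ => (1 : ℝ)) x = w m := by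
  rw [tsum_eq_single ⟨m, hm⟩, hD m hm, indicator_of_mem hx, mul_one]
  rintro ⟨j, hj⟩ hne
  have hxj : x ∉ D j := by
    rw [hD j hj]
    exact fun hxj => hne (Subtype.ext (eq_of_mem_layer_of_mem_layer hxj hx))
  rw [indicator_of_notMem hxj, mul_zero]

end Layer

theorem statement8_general
    (n : ℕ) (f : (Fin n → ℝ) → ℝ)
    (a : ℝ) (ha0 : 0 < a) (ha : a ≤ 1 / 2) (j₀ : ℤ)
    (g : ℤ → (Fin n → ℝ) → ℝ)
    (hg : ∀ j : ℤ, j₀ ≤ j → ∀ x, |f x - g j x| ≤ a * (1 + a) ^ j)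
    -- the h-construction
    (U : ℤ → Set (Fin n → ℝ))
    (hU : ∀ j : ℤ, U j = {x | (1 + a) ^ j ≤ |g j x|})
    (D : ℤ → Set (Fin n → ℝ))
    (hD : ∀ j : ℤ, j₀ < j → D j = U j \ ⋃ (k : ℤ) (_ : j < k), U k)
    (hD0 : D j₀ = Set.univ \ ⋃ (k : ℤ) (_ : j₀ < k), U k)
    (h : (Fin n → ℝ) → ℝ)
    (hh : ∀ x, h x = ∑' j : {j : ℤ // j₀ < j},
      (1 + a) ^ (j : ℤ) * Set.indicator (D (j : ℤ)) (fun _ => (1 : ℝ)) x) :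
    (∀ x ∉ D j₀, (1 - a) * h x ≤ |f x| ∧ |f x| ≤ (1 + a) ^ 2 * h x) ∧
    (∀ x ∈ D j₀, |f x| ≤ (1 + a) ^ 2 * (1 + a) ^ j₀) := by
  have lower : ∀ m, j₀ ≤ m → ∀ x ∈ U m, (1 - a) * (1 + a) ^ m ≤ |f x| := fun m hm x hx =>
    one_sub_mul_le_abs_of_abs_sub_le (hg m hm x) (by rw [hU] at hx; exact hx)
  have upper : ∀ m, j₀ ≤ m → ∀ x ∉ U (m + 1), |f x| ≤ (1 + a) ^ 2 * (1 + a) ^ m := by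
    intro m hm x hx
    rw [hU, mem_ofPred_eq, not_le] at hx
    have := abs_le_one_add_mul_of_abs_sub_le (hg (m + 1) (by omega) x) hx
    rwa [zpow_add_one₀ (by linarith), ← mul_assoc, mul_comm _ ((1 + a) ^ m), mul_assoc,
      ← sq, mul_comm] at this
  refine ⟨fun x hx => ?_, fun x hx => upper j₀ le_rfl x ?_⟩
  · have hxU : ∃ k, j₀ < k ∧ x ∈ U k := by simpa [hD0] using hx
    have hbdd : BddAbove {k | j₀ < k ∧ x ∈ U k} :=
      (bddAbove_setOf_one_sub_mul_zpow_le ha0 (by linarith) |f x|).mono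
        fun k hk => lower k hk.1.le x hk.2
    obtain ⟨m, hm, hxm⟩ := exists_mem_layer_of_bddAbove hxU hbdd
    rw [hh, tsum_mul_indicator_eq_of_mem_layer hD _ hm hxm]
    exact ⟨lower m hm.le x (mem_layer_iff.mp hxm).1,
      upper m hm.le x ((mem_layer_iff.mp hxm).2 _ (lt_add_one m))⟩
  · rw [hD0] at hx
    exact fun hxU => hx.2 (mem_iUnion₂.mpr ⟨j₀ + 1, lt_add_one j₀, hxU⟩)

/-- Properties of the `h`-mapping. If `f` is bounded, `a ∈ (0,1/2]`, and
`g_j` approximates `f` with `‖f − g_j‖_∞ ≤ a(1+a)^j` for `j ≥ j₀`, then with `U_j`, `D_j`, `h`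
as in the h-construction: (i) `(1−a)h(x) ≤ |f(x)| ≤ (1+a)²h(x)` off `D_{j₀}`, and
(ii) `|f(x)| ≤ (1+a)²(1+a)^{j₀}` on `D_{j₀}`. -/
theorem statement8
    (n : ℕ) (f : (Fin n → ℝ) → ℝ) (T : ℝ) (hf : ∀ x, |f x| ≤ T)
    (a : ℝ) (ha0 : 0 < a) (ha : a ≤ 1 / 2) (j₀ : ℤ)
    (g : ℤ → (Fin n → ℝ) → ℝ)
    (hg : ∀ j : ℤ, j₀ ≤ j → ∀ x, |f x - g j x| ≤ a * (1 + a) ^ j)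
    -- the h-construction
    (U : ℤ → Set (Fin n → ℝ))
    (hU : ∀ j : ℤ, U j = {x | (1 + a) ^ j ≤ |g j x|})
    (D : ℤ → Set (Fin n → ℝ))
    (hD : ∀ j : ℤ, j₀ < j → D j = U j \ ⋃ (k : ℤ) (_ : j < k), U k)
    (hD0 : D j₀ = Set.univ \ ⋃ (k : ℤ) (_ : j₀ < k), U k)
    (h : (Fin n → ℝ) → ℝ)
    (hh : ∀ x, h x = ∑' j : {j : ℤ // j₀ < j},
      (1 + a) ^ (j : ℤ) * Set.indicator (D (j : ℤ)) (fun _ => (1 : ℝ)) x) :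
    (∀ x ∉ D j₀, (1 - a) * h x ≤ |f x| ∧ |f x| ≤ (1 + a) ^ 2 * h x) ∧
    (∀ x ∈ D j₀, |f x| ≤ (1 + a) ^ 2 * (1 + a) ^ j₀) :=
  statement8_general n f a ha0 ha j₀ g hg U hU D hD hD0 h hh
end
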